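/- arXiv:1112.1050 — 2 statements merged into one kernel-verified Lean document; each statement's English description precedes it below -/
import Mathlib

section
/- Let (M, φ, ξ, η, g) be a Lorentzian almost contact metric manifold (s = 1, g(ξ,ξ) = −1), p ∈ M, and F : (T_pM)^4 → ℝ a curvature-like map satisfying F(x, ξ, y, ξ) = g(φx, φy) and F(φx, φy, φz, ξ) = 0 for all x,y,z. Then F vanishes on all degenerate 2-planes span{u, y} with u ∈ N(ξ_p) and y ∈ u^⊥ ∩ Im(φ_p) if and only if F(x,y,z,w) = g(x,w)g(y,z) − g(y,w)g(x,z) for all x,y,z,w ∈ T_pM. -/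
/-- A symmetric bilinear form on a real vector space is *Lorentzian* if it admits an
orthonormal basis with exactly one timelike vector. -/
def IsLorentzian {V : Type*} [AddCommGroup V] [Module ℝ V]
    (g : V →ₗ[ℝ] V →ₗ[ℝ] ℝ) : Prop :=
  ∃ (n : ℕ) (b : Module.Basis (Fin (n + 1)) ℝ V), ∀ i j,
    g (b i) (b j) = if i = j then (if i = 0 then (-1 : ℝ) else 1) else 0

/-!
A curvature-like map is determined by its sectional form `F(x,y,x,y)` (polarize twice, then use
the Bianchi identity), so it suffices to compare `F` with `R(x,y,z,w) = g(x,w)g(y,z) − g(y,w)g(x,z)`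
on pairs. `ker η` is spacelike because `ξ` is timelike; for orthonormal `x, y ∈ ker η` the null
planes spanned by `ξ ± x` and `y` give `F(x,y,x,y) = −F(ξ,y,ξ,y) = −g(y,y) = R(x,y,x,y)`, and
Gram–Schmidt extends this to all pairs in `ker η`. The structural conditions give
`F(ξ,v,ξ,v) = R(ξ,v,ξ,v)` and, since `ker η = Im φ`, `F(a,b,c,ξ) = 0 = R(a,b,c,ξ)` on `ker η`; as
`V = ℝξ ⊕ ker η` and sectional forms are invariant under `y ↦ y + t x`, the agreement spreads to
all of `V`.
-/

section CurvatureLike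

variable {K V : Type*} [Field K] [AddCommGroup V] [Module K V]

structure IsCurvatureLike (F : V →ₗ[K] V →ₗ[K] V →ₗ[K] V →ₗ[K] K) : Prop where
  pair : ∀ x y z w, F x y z w = F z w x y
  antisymm_left : ∀ x y z w, F x y z w = -F y x z w
  antisymm_right : ∀ x y z w, F x y z w = -F x y w z
  bianchi : ∀ x y z w, F x y z w + F y z x w + F z x y w = 0

def metricCurvature (g : V →ₗ[K] V →ₗ[K] K) : V →ₗ[K] V →ₗ[K] V →ₗ[K] V →ₗ[K] K :=
  LinearMap.mk₂ K
    (fun x y => (LinearMap.mul K K).compl₁₂ (g y) (g x) - (LinearMap.mul K K).compl₁₂ (g x) (g y))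
    (fun _ _ _ => by ext; simp; ring) (fun _ _ _ => by ext; simp; ring)
    (fun _ _ _ => by ext; simp; ring) (fun _ _ _ => by ext; simp; ring)

@[simp]
lemma metricCurvature_apply (g : V →ₗ[K] V →ₗ[K] K) (x y z w : V) :
    metricCurvature g x y z w = g x w * g y z - g y w * g x z := by
  simp [metricCurvature]; ring

lemma isCurvatureLike_metricCurvature {g : V →ₗ[K] V →ₗ[K] K} (hg : ∀ x y, g x y = g y x) :
    IsCurvatureLike (metricCurvature g) where
  pair x y z w := by simp only [metricCurvature_apply]; rw [hg z y, hg w x, hg w y, hg z x]; ring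
  antisymm_left x y z w := by simp only [metricCurvature_apply]; ring
  antisymm_right x y z w := by simp only [metricCurvature_apply]; ring
  bianchi x y z w := by simp only [metricCurvature_apply]; rw [hg z y, hg z x, hg y x]; ring

namespace IsCurvatureLike

variable {F G : V →ₗ[K] V →ₗ[K] V →ₗ[K] V →ₗ[K] K}

lemma apply_self_left [CharZero K] (hF : IsCurvatureLike F) (x z w : V) : F x x z w = 0 :=
  self_eq_neg.mp (hF.antisymm_left x x z w)

lemma apply_self_right [CharZero K] (hF : IsCurvatureLike F) (x y z : V) : F x y z z = 0 :=
  self_eq_neg.mp (hF.antisymm_right x y z z)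

lemma sectional_comm (hF : IsCurvatureLike F) (x y : V) : F y x y x = F x y x y := by
  rw [hF.antisymm_left, hF.antisymm_right, neg_neg]

lemma sectional_add_smul_left (hF : IsCurvatureLike F) (x x' y : V) (t : K) :
    F (x + t • x') y (x + t • x') y = F x y x y + 2 * t * F x y x' y + t ^ 2 * F x' y x' y := by
  simp only [map_add, map_smul, LinearMap.add_apply, LinearMap.smul_apply, smul_eq_mul]
  rw [hF.pair x' y x y]; ring

lemma sectional_add_smul_right [CharZero K] (hF : IsCurvatureLike F) (x y : V) (t : K) :
    F x (y + t • x) x (y + t • x) = F x y x y := by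
  simp [hF.apply_self_left, hF.apply_self_right]

lemma ext_of_sectional [CharZero K] (hF : IsCurvatureLike F) (hG : IsCurvatureLike G)
    (h : ∀ x y, F x y x y = G x y x y) : F = G := by
  have polar₁ : ∀ x y z, F x y z y = G x y z y := fun x y z => by
    have hF' := hF.sectional_add_smul_left x z y 1
    have hG' := hG.sectional_add_smul_left x z y 1
    rw [h, h x, h z] at hF'
    have : 2 * F x y z y = 2 * G x y z y := by linear_combination hG' - hF'
    exact mul_left_cancel₀ two_ne_zero this
  have polar₂ : ∀ x y z w, F x y z w + F x w z y = G x y z w + G x w z y := fun x y z w => by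
    have := polar₁ x (y + w) z
    simp only [map_add, LinearMap.add_apply, polar₁] at this
    linear_combination this
  have cyclic : ∀ x y z w, F y z x w - G y z x w = F z x y w - G z x y w := fun x y z w => by
    rw [hF.pair, hG.pair]
    linear_combination polar₂ x w y z - hF.antisymm_left x z y w + hG.antisymm_left x z y w
  ext x y z w
  have : (3 : K) * (F x y z w - G x y z w) = 0 := by
    linear_combination hF.bianchi x y z w - hG.bianchi x y z w + cyclic x y z w + 2 * cyclic z x y w
  simpa [sub_eq_zero] using this

lemma sectional_eq_of_ker [CharZero K] (hF : IsCurvatureLike F) (hG : IsCurvatureLike G)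
    (η : V →ₗ[K] K) (ξ : V) (hηξ : η ξ = 1)
    (hξ : ∀ v, η v = 0 → F ξ v ξ v = G ξ v ξ v)
    (hmixed : ∀ a b c, η a = 0 → η b = 0 → η c = 0 → F a b c ξ = G a b c ξ)
    (hker : ∀ a b, η a = 0 → η b = 0 → F a b a b = G a b a b) (x y : V) :
    F x y x y = G x y x y := by
  have hker_right : ∀ x y, η y = 0 → F x y x y = G x y x y := fun x y hy => by
    set x₀ := x - η x • ξ
    have hx₀ : η x₀ = 0 := by simp [x₀, hηξ]
    have hx : x = x₀ + η x • ξ := by simp [x₀]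
    rw [hx, hF.sectional_add_smul_left, hG.sectional_add_smul_left, hF.antisymm_right x₀ y ξ,
      hG.antisymm_right x₀ y ξ, hker x₀ y hx₀ hy, hmixed x₀ y y hx₀ hy hy, hξ y hy]
  by_cases hx : η x = 0
  · rw [← hF.sectional_comm, ← hG.sectional_comm]
    exact hker_right y x hx
  · set y' := y + (-(η y / η x)) • x
    have hy' : η y' = 0 := by simp [y', hx]
    rw [← hF.sectional_add_smul_right x y (-(η y / η x)),
      ← hG.sectional_add_smul_right x y (-(η y / η x))]
    exact hker_right x y' hy'

end IsCurvatureLike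

end CurvatureLike

open Finset in
lemma eq_zero_of_minkowski_orthogonal_timelike {ι : Type*} [Fintype ι] {a₀ u₀ : ℝ} {a u : ι → ℝ}
    (ha : -(a₀ * a₀) + ∑ i, a i * a i < 0) (hau : -(u₀ * a₀) + ∑ i, u i * a i = 0)
    (hu : -(u₀ * u₀) + ∑ i, u i * u i ≤ 0) : u₀ = 0 ∧ u = 0 := by
  simp only [← sq] at ha hu
  have hSu := sum_nonneg fun i (_ : i ∈ univ) => sq_nonneg (u i)
  have hSa := sum_nonneg fun i (_ : i ∈ univ) => sq_nonneg (a i)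
  have hu₀ : u₀ = 0 := by
    by_contra hu₀
    have cauchySchwarz := sum_mul_sq_le_sq_mul_sq univ u a
    rw [show ∑ i, u i * a i = u₀ * a₀ by linarith] at cauchySchwarz
    have := mul_lt_mul_of_pos_left (a := u₀ ^ 2) (by linarith : ∑ i, a i ^ 2 < a₀ ^ 2)
      (by positivity)
    nlinarith [mul_le_mul_of_nonneg_right (by linarith : ∑ i, u i ^ 2 ≤ u₀ ^ 2) hSa]
  subst hu₀
  refine ⟨rfl, funext fun i => ?_⟩
  have := (sum_eq_zero_iff_of_nonneg fun i _ => sq_nonneg (u i)).mp (by linarith) i (mem_univ i)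
  simpa using this

lemma IsLorentzian.pos_of_orthogonal_timelike {V : Type*} [AddCommGroup V] [Module ℝ V]
    {g : V →ₗ[ℝ] V →ₗ[ℝ] ℝ} (hg : IsLorentzian g) {ξ v : V} (hξ : g ξ ξ < 0) (hv : g v ξ = 0)
    (hv0 : v ≠ 0) : 0 < g v v := by
  obtain ⟨n, b, hb⟩ := hg
  have coords : ∀ x y, g x y =
      -(b.repr x 0 * b.repr y 0) + ∑ i : Fin n, b.repr x i.succ * b.repr y i.succ := by
    intro x y
    conv_lhs => rw [← b.sum_repr x, ← b.sum_repr y]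
    simp only [map_sum, map_smul, LinearMap.sum_apply, LinearMap.smul_apply, smul_eq_mul, hb]
    simp [Fin.sum_univ_succ, Fin.succ_ne_zero, mul_comm]
  by_contra hvv
  rw [coords] at hξ hv hvv
  obtain ⟨h₀, hsucc⟩ := eq_zero_of_minkowski_orthogonal_timelike hξ hv (not_lt.mp hvv)
  exact hv0 (b.repr.map_eq_zero_iff.mp (Finsupp.ext (Fin.cases h₀ (congrFun hsucc))))

namespace IsCurvatureLike

variable {V : Type*} [AddCommGroup V] [Module ℝ V] {F G : V →ₗ[ℝ] V →ₗ[ℝ] V →ₗ[ℝ] V →ₗ[ℝ] ℝ}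

lemma sectional_eq_of_orthonormal (hF : IsCurvatureLike F) (hG : IsCurvatureLike G)
    {g : V →ₗ[ℝ] V →ₗ[ℝ] ℝ} {p : Submodule ℝ V} (hpos : ∀ x ∈ p, x ≠ 0 → 0 < g x x)
    (h : ∀ x ∈ p, ∀ y ∈ p, g x x = 1 → g x y = 0 → F x y x y = G x y x y) :
    ∀ x ∈ p, ∀ y ∈ p, F x y x y = G x y x y := by
  intro x hx y hy
  rcases eq_or_ne x 0 with rfl | hx0
  · simp
  have hr := hpos x hx hx0
  set s := √(g x x)
  have hs : s ≠ 0 := (Real.sqrt_pos.mpr hr).ne'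
  set x' := s⁻¹ • x
  set y' := y + (-(g x y / g x x)) • x
  have hx' : x = s • x' := by simp [x', smul_smul, hs]
  have reduce : ∀ H : V →ₗ[ℝ] V →ₗ[ℝ] V →ₗ[ℝ] V →ₗ[ℝ] ℝ, IsCurvatureLike H →
      H x y x y = s ^ 2 * H x' y' x' y' := fun H hH => by
    rw [← hH.sectional_add_smul_right x y (-(g x y / g x x))]
    change H x y' x y' = _
    rw [hx']
    simp only [map_smul, LinearMap.smul_apply, smul_eq_mul]
    ring
  have hx'x' : g x' x' = 1 := by
    simp [x', ← mul_assoc, ← sq, s, Real.sq_sqrt hr.le, hr.ne']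
  have hx'y' : g x' y' = 0 := by
    simp [x', y', div_mul_cancel₀ _ hr.ne']
  rw [reduce F hF, reduce G hG,
    h x' (p.smul_mem _ hx) y' (p.add_mem hy (p.smul_mem _ hx)) hx'x' hx'y']

end IsCurvatureLike

section AlmostContact

variable {V : Type*} [AddCommGroup V] [Module ℝ V] {g : V →ₗ[ℝ] V →ₗ[ℝ] ℝ} {φ : V →ₗ[ℝ] V}
  {ξ : V} {η : V →ₗ[ℝ] ℝ} {F : V →ₗ[ℝ] V →ₗ[ℝ] V →ₗ[ℝ] V →ₗ[ℝ] ℝ}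

lemma IsCurvatureLike.sectional_xi_eq (hF : IsCurvatureLike F)
    (hF1 : ∀ x y : V, F x ξ y ξ = g (φ x) (φ y))
    (hmetriccompat : ∀ x y, g (φ x) (φ y) = g x y + η x * η y) {v : V} (hv : η v = 0) :
    F ξ v ξ v = g v v := by
  rw [← hF.sectional_comm, hF1, hmetriccompat, hv, mul_zero, add_zero]

lemma apply_xi_eq_zero_of_ker (hphi2 : ∀ x, φ (φ x) = -x + η x • ξ)
    (hF2 : ∀ x y z : V, F (φ x) (φ y) (φ z) ξ = 0) {a b c : V}
    (ha : η a = 0) (hb : η b = 0) (hc : η c = 0) : F a b c ξ = 0 := by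
  have hφ : ∀ v, η v = 0 → φ (-φ v) = v := fun v hv => by simp [hphi2, hv]
  rw [← hφ a ha, ← hφ b hb, ← hφ c hc]
  exact hF2 _ _ _

lemma IsCurvatureLike.sectional_eq_neg_of_null (hF : IsCurvatureLike F)
    (hgsymm : ∀ x y, g x y = g y x) (hgxi : ∀ x : V, g x ξ = -η x) (hηξ : η ξ = 1)
    (hF1 : ∀ x y : V, F x ξ y ξ = g (φ x) (φ y))
    (hmetriccompat : ∀ x y, g (φ x) (φ y) = g x y + η x * η y)
    (hnull : ∀ u y : V, g u u = 0 → g u ξ = -1 → g u y = 0 → η y = 0 → F u y u y = 0)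
    {x y : V} (hx : η x = 0) (hy : η y = 0) (hxx : g x x = 1) (hxy : g x y = 0) :
    F x y x y = -g y y := by
  have hξx : g ξ x = 0 := by rw [hgsymm, hgxi, hx, neg_zero]
  have hξy : g ξ y = 0 := by rw [hgsymm, hgxi, hy, neg_zero]
  have null : ∀ t : ℝ, t ^ 2 = 1 → F (ξ + t • x) y (ξ + t • x) y = 0 := fun t ht =>
    hnull _ _ (by simp [hgxi, hx, hηξ, hξx, hxx, ht, ← sq]) (by simp [hgxi, hx, hηξ])
      (by simp [hξy, hxy]) hy
  have hplus := null 1 (one_pow 2)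
  have hminus := null (-1) (by norm_num)
  rw [hF.sectional_add_smul_left, hF.sectional_xi_eq hF1 hmetriccompat hy] at hplus hminus
  linear_combination (hplus + hminus) / 2

end AlmostContact

theorem curvatureLike_contact_characterization_general
    {V : Type*} [AddCommGroup V] [Module ℝ V]
    (g : V →ₗ[ℝ] V →ₗ[ℝ] ℝ) (hgsymm : ∀ x y, g x y = g y x)
    (hgL : IsLorentzian g)
    (φ : V →ₗ[ℝ] V) (ξ : V) (η : V →ₗ[ℝ] ℝ)
    (hphi2 : ∀ x, φ (φ x) = -x + η x • ξ)
    (hηξ : η ξ = 1)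
    (hmetriccompat : ∀ x y, g (φ x) (φ y) = g x y + η x * η y)
    (hgxi : ∀ x : V, g x ξ = -η x)
    (F : V →ₗ[ℝ] V →ₗ[ℝ] V →ₗ[ℝ] V →ₗ[ℝ] ℝ)
    -- curvature symmetries
    (hpair : ∀ x y z w, F x y z w = F z w x y)
    (hanti1 : ∀ x y z w, F x y z w = - F y x z w)
    (hanti2 : ∀ x y z w, F x y z w = - F x y w z)
    (hbianchi : ∀ x y z w, F x y z w + F y z x w + F z x y w = 0)
    -- the two structural conditions on `F`
    (hF1 : ∀ x y : V, F x ξ y ξ = g (φ x) (φ y))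
    (hF2 : ∀ x y z : V, F (φ x) (φ y) (φ z) ξ = 0) :
    (∀ u y : V, g u u = 0 → g u ξ = -1 → g u y = 0 → η y = 0 →
        F u y u y = 0) ↔
    (∀ x y z w : V, F x y z w = g x w * g y z - g y w * g x z) := by
  have hF : IsCurvatureLike F := ⟨hpair, hanti1, hanti2, hbianchi⟩
  have hR := isCurvatureLike_metricCurvature hgsymm
  have hgξ : ∀ v, η v = 0 → g v ξ = 0 := fun v hv => by rw [hgxi, hv, neg_zero]
  have hξξ : g ξ ξ = -1 := by rw [hgxi, hηξ]
  constructor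
  · intro hnull
    have hpos : ∀ v ∈ LinearMap.ker η, v ≠ 0 → 0 < g v v := fun v hv =>
      hgL.pos_of_orthogonal_timelike (by rw [hξξ]; norm_num) (hgξ v hv)
    have hFR : F = metricCurvature g := by
      refine hF.ext_of_sectional hR (hF.sectional_eq_of_ker hR η ξ hηξ (fun v hv => ?_)
        (fun a b c ha hb hc => ?_) fun a b ha hb => ?_)
      · simp [hF.sectional_xi_eq hF1 hmetriccompat hv, hgξ v hv, hgsymm ξ v, hξξ]
      · simp [apply_xi_eq_zero_of_ker hphi2 hF2 ha hb hc, hgξ a ha, hgξ b hb]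
      · refine hF.sectional_eq_of_orthonormal hR hpos (fun x hx y hy hxx hxy => ?_) a ha b hb
        rw [hF.sectional_eq_neg_of_null hgsymm hgxi hηξ hF1 hmetriccompat hnull hx hy hxx hxy]
        simp [hxx, hxy, hgsymm y x]
    simp [hFR]
  · intro h u y hu _ huy _
    rw [h, hgsymm y u, huy, hu]
    ring

/-- On (the tangent space at a point `p` of) a Lorentzian almost contact metric
manifold (`s = 1`, `g(ξ,ξ) = −1`), a curvature-like map `F` with
`F(x,ξ,y,ξ) = g(φx,φy)` and `F(φx,φy,φz,ξ) = 0` vanishes on every degenerate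
plane `span{u,y}` with `u ∈ N(ξ_p)` and `y ∈ u^⊥ ∩ Im(φ_p)` iff
`F(x,y,z,w) = g(x,w)g(y,z) − g(y,w)g(x,z)` for all `x,y,z,w`. -/
theorem curvatureLike_contact_characterization
    {V : Type*} [AddCommGroup V] [Module ℝ V] [FiniteDimensional ℝ V]
    (g : V →ₗ[ℝ] V →ₗ[ℝ] ℝ) (hgsymm : ∀ x y, g x y = g y x)
    (hgL : IsLorentzian g)
    (φ : V →ₗ[ℝ] V) (ξ : V) (η : V →ₗ[ℝ] ℝ)
    (hphi2 : ∀ x, φ (φ x) = -x + η x • ξ)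
    (hηξ : η ξ = 1)
    (hφξ : φ ξ = 0) (hηφ : ∀ x, η (φ x) = 0)
    (hmetriccompat : ∀ x y, g (φ x) (φ y) = g x y + η x * η y)
    (hgxi : ∀ x : V, g x ξ = -η x)
    (F : V →ₗ[ℝ] V →ₗ[ℝ] V →ₗ[ℝ] V →ₗ[ℝ] ℝ)
    -- curvature symmetries
    (hpair : ∀ x y z w, F x y z w = F z w x y)
    (hanti1 : ∀ x y z w, F x y z w = - F y x z w)
    (hanti2 : ∀ x y z w, F x y z w = - F x y w z)
    (hbianchi : ∀ x y z w, F x y z w + F y z x w + F z x y w = 0)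
    -- the two structural conditions on `F`
    (hF1 : ∀ x y : V, F x ξ y ξ = g (φ x) (φ y))
    (hF2 : ∀ x y z : V, F (φ x) (φ y) (φ z) ξ = 0) :
    (∀ u y : V, g u u = 0 → g u ξ = -1 → g u y = 0 → η y = 0 →
        F u y u y = 0) ↔
    (∀ x y z w : V, F x y z w = g x w * g y z - g y w * g x z) :=
  curvatureLike_contact_characterization_general g hgsymm hgL φ ξ η hphi2 hηξ hmetriccompat hgxi F
    hpair hanti1 hanti2 hbianchi hF1 hF2
end

section
/- Let (M, φ, ξ_α, η^α, g) be a Lorentzian g.f.f-manifold, dim M = 2n+s, s ≥ 2, with ξ_1 timelike. Fix p ∈ M, and let F : (T_pM)^4 → ℝ be a curvature-like map satisfying F(x, ξ_α, y, ξ_β) = ε_α ε_β g(φx, φy) and F(φx, φy, φz, ξ_α) = 0 for all x,y,z ∈ T_pM and all α, β. Define the (0,4)-tensors T and S by g(T(x,y)z, w) with T(X,Y)Z = g(φY,φZ)η̃(X)ξ̃ − g(φX,φZ)η̃(Y)ξ̃ − η̃(Y)η̃(Z)φ²X + η̃(X)η̃(Z)φ²Y and S(X,Y)Z = g(φX,φZ)φ²Y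 − g(φY,φZ)φ²X. Then F(u,y,u,y) = 0 for every degenerate plane span{u,y} with u ∈ N_φ((ξ_1)_p) and y ∈ u^⊥ ∩ Im(φ_p), if and only if F(x,y,z,w) = g(S(x,y)z, w) − g(T(x,y)z, w) for all x,y,z,w ∈ T_pM. -/
open Finset

section Lorentzian

variable {V : Type*} [AddCommGroup V] [Module ℝ V]

theorem IsLorentzian.apply_pos_of_orthogonal_timelike {g : V →ₗ[ℝ] V →ₗ[ℝ] ℝ}
    (hg : IsLorentzian g) {u x : V} (hu : g u u = -1) (hxu : g x u = 0) (hx : x ≠ 0) :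
    0 < g x x := by
  obtain ⟨n, b, hb⟩ := hg
  have hcoord : ∀ v w, g v w =
      -(b.repr v 0 * b.repr w 0) + ∑ i : Fin n, b.repr v i.succ * b.repr w i.succ := by
    intro v w
    conv_lhs => rw [← b.sum_repr v, ← b.sum_repr w]
    simp only [map_sum, map_smul, LinearMap.sum_apply, LinearMap.smul_apply, smul_eq_mul, hb,
      mul_ite, mul_zero, sum_ite_eq', mem_univ, if_true]
    simp [Fin.sum_univ_succ, Fin.succ_ne_zero, mul_comm]
  rw [hcoord] at hu hxu ⊢
  set c := b.repr x
  set d := b.repr u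
  have hSd : 0 ≤ ∑ i : Fin n, d i.succ * d i.succ := sum_nonneg fun i _ => mul_self_nonneg _
  have hd₀ : d 0 ≠ 0 := fun h => by nlinarith [h ▸ hu]
  rcases (sum_nonneg fun i _ => mul_self_nonneg (c (Fin.succ i)) :
      0 ≤ ∑ i : Fin n, c i.succ * c i.succ).eq_or_lt with hc | hc
  · have hcs : ∀ i : Fin n, c i.succ = 0 := fun i => mul_self_eq_zero.mp
      ((sum_eq_zero_iff_of_nonneg fun i _ => mul_self_nonneg _).mp hc.symm i (mem_univ i))
    have hc₀ : c 0 = 0 := by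
      simp only [hcs, zero_mul, sum_const_zero, add_zero, neg_eq_zero] at hxu
      exact (mul_eq_zero.mp hxu).resolve_right hd₀
    refine absurd (b.repr.map_eq_zero_iff.mp ?_) hx
    ext i
    exact Fin.cases hc₀ hcs i
  · -- reverse Cauchy–Schwarz: `(c₀ d₀)² ≤ |c|² |d|² = |c|² (d₀² - 1)` on the spacelike coordinates
    have hCS := sum_mul_sq_le_sq_mul_sq univ (fun i : Fin n => c i.succ) (fun i => d i.succ)
    simp only [sq] at hCS
    rw [show ∑ i : Fin n, c i.succ * d i.succ = c 0 * d 0 by linarith,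
      show ∑ i : Fin n, d i.succ * d i.succ = d 0 * d 0 - 1 by linarith] at hCS
    by_contra! h
    have := mul_le_mul_of_nonneg_left h (sq_nonneg (d 0))
    nlinarith

end Lorentzian

section CurvatureLike

variable {𝕜 V : Type*} [CommRing 𝕜] [AddCommGroup V] [Module 𝕜 V]

structure IsCurvatureLike_s17 (R : V →ₗ[𝕜] V →ₗ[𝕜] V →ₗ[𝕜] V →ₗ[𝕜] 𝕜) : Prop where
  pair_symm : ∀ x y z w, R x y z w = R z w x y
  antisymm_left : ∀ x y z w, R x y z w = -R y x z w
  antisymm_right : ∀ x y z w, R x y z w = -R x y w z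
  bianchi : ∀ x y z w, R x y z w + R y z x w + R z x y w = 0

def constCurvatureTensor (B : V →ₗ[𝕜] V →ₗ[𝕜] 𝕜) : V →ₗ[𝕜] V →ₗ[𝕜] V →ₗ[𝕜] V →ₗ[𝕜] 𝕜 :=
  LinearMap.mk₂ 𝕜 (fun x y => (B y).smulRight (B x) - (B x).smulRight (B y))
    (by intros; ext; simp; ring) (by intros; ext; simp; ring)
    (by intros; ext; simp; ring) (by intros; ext; simp; ring)

@[simp]
theorem constCurvatureTensor_apply (B : V →ₗ[𝕜] V →ₗ[𝕜] 𝕜) (x y z w : V) :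
    constCurvatureTensor B x y z w = B y z * B x w - B x z * B y w := by
  simp [constCurvatureTensor]

theorem isCurvatureLike_constCurvatureTensor {B : V →ₗ[𝕜] V →ₗ[𝕜] 𝕜}
    (hB : ∀ x y, B x y = B y x) : IsCurvatureLike_s17 (constCurvatureTensor B) where
  pair_symm x y z w := by simp only [constCurvatureTensor_apply, hB w, hB z]; ring
  antisymm_left x y z w := by simp only [constCurvatureTensor_apply]; ring
  antisymm_right x y z w := by simp only [constCurvatureTensor_apply]; ring
  bianchi x y z w := by simp only [constCurvatureTensor_apply, hB z, hB y x]; ring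

namespace IsCurvatureLike_s17

variable {R S : V →ₗ[𝕜] V →ₗ[𝕜] V →ₗ[𝕜] V →ₗ[𝕜] 𝕜}

theorem add (hR : IsCurvatureLike_s17 R) (hS : IsCurvatureLike_s17 S) : IsCurvatureLike_s17 (R + S) where
  pair_symm x y z w := by simp only [LinearMap.add_apply, hR.pair_symm x, hS.pair_symm x]
  antisymm_left x y z w := by
    simp only [LinearMap.add_apply]; rw [hR.antisymm_left, hS.antisymm_left, neg_add]
  antisymm_right x y z w := by
    simp only [LinearMap.add_apply]; rw [hR.antisymm_right, hS.antisymm_right, neg_add]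
  bianchi x y z w := by
    simp only [LinearMap.add_apply]; linear_combination hR.bianchi x y z w + hS.bianchi x y z w

theorem smul (hR : IsCurvatureLike_s17 R) (c : 𝕜) : IsCurvatureLike_s17 (c • R) where
  pair_symm x y z w := by simp only [LinearMap.smul_apply, hR.pair_symm x]
  antisymm_left x y z w := by
    simp only [LinearMap.smul_apply]; rw [hR.antisymm_left, smul_neg]
  antisymm_right x y z w := by
    simp only [LinearMap.smul_apply]; rw [hR.antisymm_right, smul_neg]
  bianchi x y z w := by
    simp only [LinearMap.smul_apply, ← smul_add, hR.bianchi x y z w, smul_zero]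

theorem apply_add_add_of_sectional_eq_zero (hR : IsCurvatureLike_s17 R) {u x y : V}
    (hu : R u y u y = 0) (hux : R x y u y = 0) : R (u + x) y (u + x) y = R x y x y := by
  simp only [map_add, LinearMap.add_apply, hu, hux, hR.pair_symm u y x y]
  ring

theorem eq_zero_of_span_union (hR : IsCurvatureLike_s17 R) {W : Submodule 𝕜 V} {U : Set V}
    (hspan : Submodule.span 𝕜 ((W : Set V) ∪ U) = ⊤)
    (h₀ : ∀ a ∈ W, ∀ b ∈ W, ∀ c ∈ W, ∀ d ∈ W, R a b c d = 0)
    (h₁ : ∀ a ∈ W, ∀ b ∈ W, ∀ c ∈ W, ∀ u ∈ U, R a b c u = 0)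
    (h₂ : ∀ x y, ∀ u ∈ U, ∀ v ∈ U, R x u y v = 0) : R = 0 := by
  have h₁₄ : ∀ x y, ∀ u ∈ U, ∀ v ∈ U, R u x y v = 0 := fun x y u hu v hv => by
    rw [hR.antisymm_left, h₂ x y u hu v hv, neg_zero]
  have h₃₄ : ∀ x y, ∀ u ∈ U, ∀ v ∈ U, R x y u v = 0 := fun x y u hu v hv => by
    have := hR.bianchi u v x y
    rw [hR.antisymm_left v, hR.antisymm_right x v, hR.antisymm_right x u, h₂ x y v hv u hu,
      h₂ x y u hu v hv] at this
    rw [hR.pair_symm, ← this]; ring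
  have hlast : ∀ a b c, a ∈ (W : Set V) ∪ U → b ∈ (W : Set V) ∪ U → c ∈ (W : Set V) ∪ U →
      ∀ u ∈ U, R a b c u = 0 := by
    intro a b c ha hb hc u hu
    rcases hc with hc | hc
    swap; · exact h₃₄ a b c hc u hu
    rcases hb with hb | hb
    swap; · exact h₂ a c b hb u hu
    rcases ha with ha | ha
    · exact h₁ a ha b hb c hc u hu
    · exact h₁₄ b c a ha u hu
  refine LinearMap.ext_on hspan fun a ha => LinearMap.ext_on hspan fun b hb =>
    LinearMap.ext_on hspan fun c hc => LinearMap.ext_on hspan fun d hd => ?_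
  simp only [LinearMap.zero_apply]
  rcases hd with hd | hd
  swap; · exact hlast a b c ha hb hc d hd
  rcases hc with hc | hc
  swap; · rw [hR.antisymm_right, hlast a b d ha hb (Or.inl hd) c hc, neg_zero]
  rcases hb with hb | hb
  swap; · rw [hR.pair_symm, hlast c d a (Or.inl hc) (Or.inl hd) ha b hb]
  rcases ha with ha | ha
  · exact h₀ a ha b hb c hc d hd
  · rw [hR.pair_symm, hR.antisymm_right, hlast c d b (Or.inl hc) (Or.inl hd) (Or.inl hb) a ha,
      neg_zero]

variable [NoZeroDivisors 𝕜] [CharZero 𝕜]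

theorem apply_self_left_s17 (hR : IsCurvatureLike_s17 R) (x z w : V) : R x x z w = 0 :=
  CharZero.eq_neg_self_iff.mp (hR.antisymm_left x x z w)

theorem apply_self_right_s17 (hR : IsCurvatureLike_s17 R) (x y z : V) : R x y z z = 0 :=
  CharZero.eq_neg_self_iff.mp (hR.antisymm_right x y z z)

theorem apply_eq_zero_of_sectional (hR : IsCurvatureLike_s17 R) {W : Submodule 𝕜 V}
    (h : ∀ x ∈ W, ∀ y ∈ W, R x y x y = 0) :
    ∀ a ∈ W, ∀ b ∈ W, ∀ c ∈ W, ∀ d ∈ W, R a b c d = 0 := by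
  have h₁ : ∀ x ∈ W, ∀ y ∈ W, ∀ z ∈ W, R x y z y = 0 := by
    intro x hx y hy z hz
    have hxz := h (x + z) (add_mem hx hz) y hy
    simp only [map_add, LinearMap.add_apply, h x hx y hy, h z hz y hy,
      hR.pair_symm z y x y] at hxz
    have : (2 : 𝕜) * R x y z y = 0 := by linear_combination hxz
    exact (mul_eq_zero.mp this).resolve_left two_ne_zero
  have h₂ : ∀ x ∈ W, ∀ y ∈ W, ∀ z ∈ W, ∀ w ∈ W, R x y z w = -R x w z y := by
    intro x hx y hy z hz w hw
    have hyw := h₁ x hx (y + w) (add_mem hy hw) z hz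
    simp only [map_add, LinearMap.add_apply, h₁ x hx y hy z hz, h₁ x hx w hw z hz] at hyw
    linear_combination hyw
  have hrot : ∀ x ∈ W, ∀ y ∈ W, ∀ z ∈ W, ∀ w ∈ W, R y z x w = R z x y w := by
    intro x hx y hy z hz w hw
    rw [hR.pair_symm, h₂ x hx w hw y hy z hz, hR.antisymm_left x z, neg_neg]
  intro a ha b hb c hc d hd
  have : (3 : 𝕜) * R a b c d = 0 := by
    linear_combination hR.bianchi a b c d + 2 * hrot c hc a ha b hb d hd
      + hrot a ha b hb c hc d hd
  exact (mul_eq_zero.mp this).resolve_left (by norm_num)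

end IsCurvatureLike_s17

end CurvatureLike

section RealCurvatureLike

variable {V : Type*} [AddCommGroup V] [Module ℝ V]

theorem IsCurvatureLike_s17.sectional_eq_zero_of_orthonormal
    {R : V →ₗ[ℝ] V →ₗ[ℝ] V →ₗ[ℝ] V →ₗ[ℝ] ℝ} (hR : IsCurvatureLike_s17 R)
    (g : V →ₗ[ℝ] V →ₗ[ℝ] ℝ) {W : Submodule ℝ V} (hpos : ∀ x ∈ W, x ≠ 0 → 0 < g x x)
    (h : ∀ x ∈ W, ∀ y ∈ W, g x x = 1 → g x y = 0 → R x y x y = 0) :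
    ∀ x ∈ W, ∀ y ∈ W, R x y x y = 0 := by
  intro x hx y hy
  rcases eq_or_ne x 0 with rfl | hx₀
  · simp
  have hxx := hpos x hx hx₀
  set e := (√(g x x))⁻¹ • x
  have he : g e e = 1 := by
    simp only [e, map_smul, LinearMap.smul_apply, smul_eq_mul]
    field_simp
    exact (Real.sq_sqrt hxx.le).symm
  have hey : g e (y - g e y • e) = 0 := by simp [he]
  have := h e (W.smul_mem _ hx) _ (W.sub_mem hy (W.smul_mem _ (W.smul_mem _ hx))) he hey
  simp only [e, map_sub, map_smul, LinearMap.sub_apply, LinearMap.smul_apply, smul_eq_mul,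
    hR.apply_self_left_s17, hR.apply_self_right_s17] at this
  simpa [hxx.ne', Real.sqrt_eq_zero'.not.mpr hxx.not_ge] using this

end RealCurvatureLike

section GFF

variable {V ι : Type*} [AddCommGroup V] [Module ℝ V]
  {g : V →ₗ[ℝ] V →ₗ[ℝ] ℝ} {φ : V →ₗ[ℝ] V} {ξ : ι → V} {η : ι → V →ₗ[ℝ] ℝ} {ε : ι → ℝ}

def etaKernel (η : ι → V →ₗ[ℝ] ℝ) : Submodule ℝ V := ⨅ α, LinearMap.ker (η α)

theorem mem_etaKernel {x : V} : x ∈ etaKernel η ↔ ∀ α, η α x = 0 := by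
  simp [etaKernel, Submodule.mem_iInf]

theorem g_xi_add_of_mem (hg : ∀ x y, g x y = g y x) (hgxi : ∀ α x, g x (ξ α) = ε α * η α x)
    (α : ι) (x : V) {y : V} (hy : y ∈ etaKernel η) : g (ξ α + x) y = g x y := by
  rw [map_add, LinearMap.add_apply, hg (ξ α), hgxi, mem_etaKernel.mp hy, mul_zero, zero_add]

theorem g_pos_of_mem_etaKernel [DecidableEq ι] (hgL : IsLorentzian g)
    (hgξξ : ∀ α β, g (ξ α) (ξ β) = if α = β then ε α else 0)
    (hgxi : ∀ α x, g x (ξ α) = ε α * η α x) {i : ι} (hi : ε i = -1) {x : V}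
    (hx : x ∈ etaKernel η) (hx₀ : x ≠ 0) : 0 < g x x :=
  hgL.apply_pos_of_orthogonal_timelike (u := ξ i) (by rw [hgξξ, if_pos rfl, hi])
    (by rw [hgxi, mem_etaKernel.mp hx, mul_zero]) hx₀

variable [Fintype ι]

def etaTilde (ε : ι → ℝ) (η : ι → V →ₗ[ℝ] ℝ) : V →ₗ[ℝ] ℝ := ∑ α, ε α • η α

@[simp]
theorem etaTilde_apply (x : V) : etaTilde ε η x = ∑ α, ε α * η α x := by
  simp [etaTilde]

theorem etaTilde_eq_zero_of_mem {x : V} (hx : x ∈ etaKernel η) : etaTilde ε η x = 0 := by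
  simp [mem_etaKernel.mp hx]

theorem etaTilde_xi [DecidableEq ι] (hηξ : ∀ α β, η α (ξ β) = if α = β then 1 else 0) (α : ι) :
    etaTilde ε η (ξ α) = ε α := by
  simp [hηξ]

def gffForm (g : V →ₗ[ℝ] V →ₗ[ℝ] ℝ) (φ : V →ₗ[ℝ] V) (ε : ι → ℝ) (η : ι → V →ₗ[ℝ] ℝ) :
    V →ₗ[ℝ] V →ₗ[ℝ] ℝ :=
  g.compl₁₂ φ φ - (etaTilde ε η).smulRight (etaTilde ε η)

@[simp]
theorem gffForm_apply (x y : V) :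
    gffForm g φ ε η x y = g (φ x) (φ y) - etaTilde ε η x * etaTilde ε η y := by
  simp [gffForm]

theorem gffForm_symm (hg : ∀ x y, g x y = g y x) (x y : V) :
    gffForm g φ ε η x y = gffForm g φ ε η y x := by
  rw [gffForm_apply, gffForm_apply, hg, mul_comm]

theorem gffForm_xi_left [DecidableEq ι] (hφξ : ∀ α, φ (ξ α) = 0)
    (hηξ : ∀ α β, η α (ξ β) = if α = β then 1 else 0) (α : ι) (y : V) :
    gffForm g φ ε η (ξ α) y = -(ε α * etaTilde ε η y) := by
  simp only [gffForm_apply, hφξ, map_zero, LinearMap.zero_apply, etaTilde_xi hηξ, zero_sub]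

theorem gffForm_xi_right [DecidableEq ι] (hφξ : ∀ α, φ (ξ α) = 0)
    (hηξ : ∀ α β, η α (ξ β) = if α = β then 1 else 0) (x : V) (α : ι) :
    gffForm g φ ε η x (ξ α) = -(etaTilde ε η x * ε α) := by
  simp only [gffForm_apply, hφξ, map_zero, etaTilde_xi hηξ, zero_sub]

theorem gffForm_eq_of_mem (hmc : ∀ x y, g (φ x) (φ y) = g x y - ∑ α, ε α * (η α x * η α y))
    {x : V} (hx : x ∈ etaKernel η) (y : V) : gffForm g φ ε η x y = g x y := by
  simp [hmc, mem_etaKernel.mp hx]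

theorem span_etaKernel_union_range (hphi2 : ∀ x, φ (φ x) = -x + ∑ α, η α x • ξ α)
    (hηφ : ∀ α x, η α (φ x) = 0) :
    Submodule.span ℝ ((etaKernel η : Set V) ∪ Set.range ξ) = ⊤ := by
  refine Submodule.eq_top_iff'.mpr fun v => ?_
  have hv : v = -φ (φ v) + ∑ α, η α v • ξ α := by rw [hphi2]; abel
  rw [hv]
  refine add_mem (Submodule.subset_span (Or.inl ?_)) (sum_mem fun α _ => ?_)
  · simp [mem_etaKernel, hηφ]
  · exact Submodule.smul_mem _ _ (Submodule.subset_span (Or.inr ⟨α, rfl⟩))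

theorem etaKernel_le_range (hphi2 : ∀ x, φ (φ x) = -x + ∑ α, η α x • ξ α) :
    etaKernel η ≤ LinearMap.range φ :=
  fun x hx => ⟨-φ x, by simp [hphi2, mem_etaKernel.mp hx]⟩

theorem g_phi_phi_left (hg : ∀ x y, g x y = g y x) (hgxi : ∀ α x, g x (ξ α) = ε α * η α x)
    (hphi2 : ∀ x, φ (φ x) = -x + ∑ α, η α x • ξ α)
    (hmc : ∀ x y, g (φ x) (φ y) = g x y - ∑ α, ε α * (η α x * η α y)) (x y : V) :
    g (φ (φ x)) y = -g (φ x) (φ y) := by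
  simp only [hphi2, hmc, map_add, map_neg, map_sum, map_smul, LinearMap.add_apply,
    LinearMap.neg_apply, LinearMap.sum_apply, LinearMap.smul_apply,
    smul_eq_mul, hg (ξ _), hgxi]
  simp only [mul_left_comm (η _ x)]
  ring

theorem g_sum_xi (hg : ∀ x y, g x y = g y x) (hgxi : ∀ α x, g x (ξ α) = ε α * η α x) (y : V) :
    g (∑ α, ξ α) y = etaTilde ε η y := by
  simp [map_sum, hg (ξ _), hgxi]

theorem constCurvatureTensor_gffForm_apply (hg : ∀ x y, g x y = g y x)
    (hgxi : ∀ α x, g x (ξ α) = ε α * η α x) (hphi2 : ∀ x, φ (φ x) = -x + ∑ α, η α x • ξ α)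
    (hmc : ∀ x y, g (φ x) (φ y) = g x y - ∑ α, ε α * (η α x * η α y)) (x y z w : V) :
    constCurvatureTensor (gffForm g φ ε η) x y z w =
      g (g (φ x) (φ z) • φ (φ y) - g (φ y) (φ z) • φ (φ x)) w
        - g (((∑ β, ε β * η β x) * g (φ y) (φ z)) • (∑ α, ξ α)
            - ((∑ β, ε β * η β y) * g (φ x) (φ z)) • (∑ α, ξ α)
            - ((∑ β, ε β * η β y) * (∑ β, ε β * η β z)) • φ (φ x)
            + ((∑ β, ε β * η β x) * (∑ β, ε β * η β z)) • φ (φ y)) w := by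
  simp only [← etaTilde_apply, map_sub, map_add, map_smul, LinearMap.sub_apply,
    LinearMap.add_apply, LinearMap.smul_apply, smul_eq_mul, g_phi_phi_left hg hgxi hphi2 hmc,
    g_sum_xi hg hgxi, constCurvatureTensor_apply, gffForm_apply]
  ring

variable {F : V →ₗ[ℝ] V →ₗ[ℝ] V →ₗ[ℝ] V →ₗ[ℝ] ℝ}

/-- Stands for `F - G`, which does not elaborate: instance search finds no `AddCommGroup` on
iterated `→ₗ`. -/
noncomputable def gffDefect (F : V →ₗ[ℝ] V →ₗ[ℝ] V →ₗ[ℝ] V →ₗ[ℝ] ℝ) (g : V →ₗ[ℝ] V →ₗ[ℝ] ℝ)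
    (φ : V →ₗ[ℝ] V) (ε : ι → ℝ) (η : ι → V →ₗ[ℝ] ℝ) : V →ₗ[ℝ] V →ₗ[ℝ] V →ₗ[ℝ] V →ₗ[ℝ] ℝ :=
  F + (-1 : ℝ) • constCurvatureTensor (gffForm g φ ε η)

theorem gffDefect_apply (x y z w : V) :
    gffDefect F g φ ε η x y z w =
      F x y z w - constCurvatureTensor (gffForm g φ ε η) x y z w := by
  simp only [gffDefect, LinearMap.add_apply, LinearMap.smul_apply, smul_eq_mul]
  ring

theorem isCurvatureLike_gffDefect (hg : ∀ x y, g x y = g y x) (hF : IsCurvatureLike_s17 F) :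
    IsCurvatureLike_s17 (gffDefect F g φ ε η) :=
  hF.add ((isCurvatureLike_constCurvatureTensor (gffForm_symm hg)).smul _)

variable [DecidableEq ι]

theorem constCurvatureTensor_gffForm_xi_xi (hφξ : ∀ α, φ (ξ α) = 0)
    (hηξ : ∀ α β, η α (ξ β) = if α = β then 1 else 0) (x y : V) (α β : ι) :
    constCurvatureTensor (gffForm g φ ε η) x (ξ α) y (ξ β) = ε α * ε β * g (φ x) (φ y) := by
  simp only [constCurvatureTensor_apply, gffForm_xi_left hφξ hηξ, gffForm_xi_right hφξ hηξ,
    gffForm_apply, etaTilde_xi hηξ]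
  ring

theorem constCurvatureTensor_gffForm_phi_xi (hφξ : ∀ α, φ (ξ α) = 0)
    (hηξ : ∀ α β, η α (ξ β) = if α = β then 1 else 0) (hηφ : ∀ α x, η α (φ x) = 0)
    (x y z : V) (α : ι) :
    constCurvatureTensor (gffForm g φ ε η) (φ x) (φ y) (φ z) (ξ α) = 0 := by
  simp [gffForm_xi_right hφξ hηξ, hηφ]

theorem constCurvatureTensor_gffForm_null (hg : ∀ x y, g x y = g y x)
    (hφξ : ∀ α, φ (ξ α) = 0) (hηξ : ∀ α β, η α (ξ β) = if α = β then 1 else 0)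
    (hmc : ∀ x y, g (φ x) (φ y) = g x y - ∑ α, ε α * (η α x * η α y))
    {i : ι} (hi : ε i = -1) {x y : V} (hx : x ∈ etaKernel η) (hy : y ∈ etaKernel η)
    (hxx : g x x = 1) (hxy : g x y = 0) :
    constCurvatureTensor (gffForm g φ ε η) (ξ i + x) y (ξ i + x) y = 0 := by
  have hu : gffForm g φ ε η (ξ i + x) (ξ i + x) = 0 := by
    simp only [map_add, LinearMap.add_apply, gffForm_xi_left hφξ hηξ, gffForm_xi_right hφξ hηξ,
      gffForm_eq_of_mem hmc hx, etaTilde_xi hηξ, etaTilde_eq_zero_of_mem hx, hi, hxx]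
    ring
  have huy : gffForm g φ ε η (ξ i + x) y = 0 := by
    simp only [map_add, LinearMap.add_apply, gffForm_xi_left hφξ hηξ,
      gffForm_eq_of_mem hmc hx, etaTilde_eq_zero_of_mem hy, hxy]
    ring
  rw [constCurvatureTensor_apply, gffForm_symm hg y, huy, hu]
  ring

theorem gffDefect_xi_xi (hφξ : ∀ α, φ (ξ α) = 0)
    (hηξ : ∀ α β, η α (ξ β) = if α = β then 1 else 0)
    (hF1 : ∀ (x y : V) (α β), F x (ξ α) y (ξ β) = ε α * ε β * g (φ x) (φ y))
    (x y : V) (α β : ι) : gffDefect F g φ ε η x (ξ α) y (ξ β) = 0 := by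
  rw [gffDefect_apply, hF1, constCurvatureTensor_gffForm_xi_xi hφξ hηξ, sub_self]

theorem gffDefect_apply_xi_of_mem (hphi2 : ∀ x, φ (φ x) = -x + ∑ α, η α x • ξ α)
    (hφξ : ∀ α, φ (ξ α) = 0) (hηξ : ∀ α β, η α (ξ β) = if α = β then 1 else 0)
    (hηφ : ∀ α x, η α (φ x) = 0) (hF2 : ∀ (x y z : V) (α), F (φ x) (φ y) (φ z) (ξ α) = 0)
    {a b c : V} (ha : a ∈ etaKernel η) (hb : b ∈ etaKernel η) (hc : c ∈ etaKernel η) (α : ι) :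
    gffDefect F g φ ε η a b c (ξ α) = 0 := by
  obtain ⟨a, rfl⟩ := etaKernel_le_range hphi2 ha
  obtain ⟨b, rfl⟩ := etaKernel_le_range hphi2 hb
  obtain ⟨c, rfl⟩ := etaKernel_le_range hphi2 hc
  rw [gffDefect_apply, hF2, constCurvatureTensor_gffForm_phi_xi hφξ hηξ hηφ, sub_self]

theorem gffDefect_sectional_eq (hg : ∀ x y, g x y = g y x)
    (hphi2 : ∀ x, φ (φ x) = -x + ∑ α, η α x • ξ α) (hφξ : ∀ α, φ (ξ α) = 0)
    (hηξ : ∀ α β, η α (ξ β) = if α = β then 1 else 0) (hηφ : ∀ α x, η α (φ x) = 0)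
    (hmc : ∀ x y, g (φ x) (φ y) = g x y - ∑ α, ε α * (η α x * η α y))
    (hF : IsCurvatureLike_s17 F)
    (hF1 : ∀ (x y : V) (α β), F x (ξ α) y (ξ β) = ε α * ε β * g (φ x) (φ y))
    (hF2 : ∀ (x y z : V) (α), F (φ x) (φ y) (φ z) (ξ α) = 0) {i : ι} (hi : ε i = -1)
    {x y : V} (hx : x ∈ etaKernel η) (hy : y ∈ etaKernel η) (hxx : g x x = 1)
    (hxy : g x y = 0) : gffDefect F g φ ε η x y x y = F (ξ i + x) y (ξ i + x) y := by
  have hH := isCurvatureLike_gffDefect (φ := φ) (ε := ε) (η := η) hg hF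
  rw [← hH.apply_add_add_of_sectional_eq_zero (u := ξ i)
    (by rw [hH.antisymm_left, hH.antisymm_right, neg_neg, gffDefect_xi_xi hφξ hηξ hF1])
    (by rw [hH.antisymm_right, gffDefect_apply_xi_of_mem hphi2 hφξ hηξ hηφ hF2 hx hy hy,
      neg_zero]),
    gffDefect_apply, constCurvatureTensor_gffForm_null hg hφξ hηξ hmc hi hx hy hxx hxy, sub_zero]

end GFF

theorem curvatureLike_gff_characterization_general
    {V : Type*} [AddCommGroup V] [Module ℝ V]
    (g : V →ₗ[ℝ] V →ₗ[ℝ] ℝ) (hgsymm : ∀ x y, g x y = g y x)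
    (hgL : IsLorentzian g)
    {s₀ : ℕ}
    (φ : V →ₗ[ℝ] V) (ξ : Fin (s₀ + 2) → V) (η : Fin (s₀ + 2) → V →ₗ[ℝ] ℝ)
    (ε : Fin (s₀ + 2) → ℝ)
    (hphi2 : ∀ x, φ (φ x) = -x + ∑ α, η α x • ξ α)
    (hηξ : ∀ α β, η α (ξ β) = if α = β then 1 else 0)
    (hφξ : ∀ α, φ (ξ α) = 0) (hηφ : ∀ α x, η α (φ x) = 0)
    (hε0 : ε 0 = -1)
    (hgξξ : ∀ α β, g (ξ α) (ξ β) = if α = β then ε α else 0)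
    (hgxi : ∀ α (x : V), g x (ξ α) = ε α * η α x)
    (hmetriccompat : ∀ x y, g (φ x) (φ y) = g x y - ∑ α, ε α * (η α x * η α y))
    (F : V →ₗ[ℝ] V →ₗ[ℝ] V →ₗ[ℝ] V →ₗ[ℝ] ℝ)
    -- curvature symmetries
    (hpair : ∀ x y z w, F x y z w = F z w x y)
    (hanti1 : ∀ x y z w, F x y z w = - F y x z w)
    (hanti2 : ∀ x y z w, F x y z w = - F x y w z)
    (hbianchi : ∀ x y z w, F x y z w + F y z x w + F z x y w = 0)
    -- the two structural conditions on `F`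
    (hF1 : ∀ (x y : V) (α β), F x (ξ α) y (ξ β) = ε α * ε β * g (φ x) (φ y))
    (hF2 : ∀ (x y z : V) (α), F (φ x) (φ y) (φ z) (ξ α) = 0) :
    -- (a) `F` vanishes on degenerate planes `span{u,y}`, `u ∈ N_φ(ξ_1)`, `y ∈ u^⊥ ∩ Im φ`
    (∀ x : V, (∀ γ, η γ x = 0) → g x x = 1 →
      ∀ y : V, g (ξ 0 + x) y = 0 → (∀ γ, η γ y = 0) →
        F (ξ 0 + x) y (ξ 0 + x) y = 0) ↔
    -- (b) `F(x,y,z,w) = g(S(x,y)z,w) − g(T(x,y)z,w)`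
    (∀ x y z w : V,
      F x y z w =
        g (g (φ x) (φ z) • φ (φ y) - g (φ y) (φ z) • φ (φ x)) w
        - g (((∑ β, ε β * η β x) * g (φ y) (φ z)) • (∑ α, ξ α)
            - ((∑ β, ε β * η β y) * g (φ x) (φ z)) • (∑ α, ξ α)
            - ((∑ β, ε β * η β y) * (∑ β, ε β * η β z)) • φ (φ x)
            + ((∑ β, ε β * η β x) * (∑ β, ε β * η β z)) • φ (φ y)) w) := by
  have hF : IsCurvatureLike_s17 F := ⟨hpair, hanti1, hanti2, hbianchi⟩
  simp_rw [← constCurvatureTensor_gffForm_apply hgsymm hgxi hphi2 hmetriccompat, ← mem_etaKernel]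
  constructor
  · intro hplane
    have hH := isCurvatureLike_gffDefect (φ := φ) (ε := ε) (η := η) hgsymm hF
    have hsec := hH.sectional_eq_zero_of_orthonormal g
      (fun x hx => g_pos_of_mem_etaKernel hgL hgξξ hgxi hε0 hx)
      fun x hx y hy hxx hxy => by
        rw [gffDefect_sectional_eq hgsymm hphi2 hφξ hηξ hηφ hmetriccompat hF hF1 hF2 hε0 hx hy hxx
          hxy, hplane x hx hxx y (by rwa [g_xi_add_of_mem hgsymm hgxi 0 x hy]) hy]
    have hH0 := hH.eq_zero_of_span_union (span_etaKernel_union_range hphi2 hηφ)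
      (hH.apply_eq_zero_of_sectional hsec)
      (by simpa using fun a ha b hb c hc =>
        gffDefect_apply_xi_of_mem hphi2 hφξ hηξ hηφ hF2 ha hb hc)
      (by simpa using gffDefect_xi_xi hφξ hηξ hF1)
    intro x y z w
    rw [← sub_eq_zero, ← gffDefect_apply, hH0]
    rfl
  · intro hG x hx hxx y hxy hy
    rw [hG]
    exact constCurvatureTensor_gffForm_null hgsymm hφξ hηξ hmetriccompat hε0 hx hy hxx
      (by rwa [g_xi_add_of_mem hgsymm hgxi 0 x hy] at hxy)

/-- On (the tangent space at a point `p` of) a Lorentzian `g.f.f`-manifold with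
`s = s₀ + 2 ≥ 2` characteristic vector fields (the timelike `ξ_1` indexed by `0`),
a curvature-like map `F` with `F(x,ξ_α,y,ξ_β) = ε_α ε_β g(φx,φy)` and
`F(φx,φy,φz,ξ_α) = 0` vanishes on every degenerate plane `span{u,y}` with
`u ∈ N_φ(ξ_1)` and `y ∈ u^⊥ ∩ Im(φ_p)` iff `F = g(S(·,·)·,·) − g(T(·,·)·,·)`,
where `T(X,Y)Z = g(φY,φZ)η̃(X)ξ̃ − g(φX,φZ)η̃(Y)ξ̃ − η̃(Y)η̃(Z)φ²X + η̃(X)η̃(Z)φ²Y`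
and `S(X,Y)Z = g(φX,φZ)φ²Y − g(φY,φZ)φ²X`, with `ξ̃ = ∑ ξ_α`, `η̃ = ∑ ε_α η^α`. -/
theorem curvatureLike_gff_characterization
    {V : Type*} [AddCommGroup V] [Module ℝ V] [FiniteDimensional ℝ V]
    (g : V →ₗ[ℝ] V →ₗ[ℝ] ℝ) (hgsymm : ∀ x y, g x y = g y x)
    (hgL : IsLorentzian g)
    {s₀ : ℕ}
    (φ : V →ₗ[ℝ] V) (ξ : Fin (s₀ + 2) → V) (η : Fin (s₀ + 2) → V →ₗ[ℝ] ℝ)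
    (ε : Fin (s₀ + 2) → ℝ)
    (hphi2 : ∀ x, φ (φ x) = -x + ∑ α, η α x • ξ α)
    (hηξ : ∀ α β, η α (ξ β) = if α = β then 1 else 0)
    (hφξ : ∀ α, φ (ξ α) = 0) (hηφ : ∀ α x, η α (φ x) = 0)
    (hε0 : ε 0 = -1) (hεpos : ∀ α, α ≠ 0 → ε α = 1)
    (hgξξ : ∀ α β, g (ξ α) (ξ β) = if α = β then ε α else 0)
    (hgxi : ∀ α (x : V), g x (ξ α) = ε α * η α x)
    (hmetriccompat : ∀ x y, g (φ x) (φ y) = g x y - ∑ α, ε α * (η α x * η α y))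
    (F : V →ₗ[ℝ] V →ₗ[ℝ] V →ₗ[ℝ] V →ₗ[ℝ] ℝ)
    -- curvature symmetries
    (hpair : ∀ x y z w, F x y z w = F z w x y)
    (hanti1 : ∀ x y z w, F x y z w = - F y x z w)
    (hanti2 : ∀ x y z w, F x y z w = - F x y w z)
    (hbianchi : ∀ x y z w, F x y z w + F y z x w + F z x y w = 0)
    -- the two structural conditions on `F`
    (hF1 : ∀ (x y : V) (α β), F x (ξ α) y (ξ β) = ε α * ε β * g (φ x) (φ y))
    (hF2 : ∀ (x y z : V) (α), F (φ x) (φ y) (φ z) (ξ α) = 0) :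
    -- (a) `F` vanishes on degenerate planes `span{u,y}`, `u ∈ N_φ(ξ_1)`, `y ∈ u^⊥ ∩ Im φ`
    (∀ x : V, (∀ γ, η γ x = 0) → g x x = 1 →
      ∀ y : V, g (ξ 0 + x) y = 0 → (∀ γ, η γ y = 0) →
        F (ξ 0 + x) y (ξ 0 + x) y = 0) ↔
    -- (b) `F(x,y,z,w) = g(S(x,y)z,w) − g(T(x,y)z,w)`
    (∀ x y z w : V,
      F x y z w =
        g (g (φ x) (φ z) • φ (φ y) - g (φ y) (φ z) • φ (φ x)) w
        - g (((∑ β, ε β * η β x) * g (φ y) (φ z)) • (∑ α, ξ α)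
            - ((∑ β, ε β * η β y) * g (φ x) (φ z)) • (∑ α, ξ α)
            - ((∑ β, ε β * η β y) * (∑ β, ε β * η β z)) • φ (φ x)
            + ((∑ β, ε β * η β x) * (∑ β, ε β * η β z)) • φ (φ y)) w) :=
  curvatureLike_gff_characterization_general g hgsymm hgL φ ξ η ε hphi2 hηξ hφξ hηφ hε0 hgξξ hgxi
    hmetriccompat F hpair hanti1 hanti2 hbianchi hF1 hF2
end
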